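/- Let G = (V, E) be a finite simple graph of neighborhood independence at most r (r ≥ 1), and let y be a greedy packing of G such that Σ_y(v) ≥ 1/2 for every vertex v ∈ V. Then every independent set S of G satisfies |S| ≤ 2r · Σ_{v ∈ V} y_v. -/

import Mathlib

open Finset
open Classical

/-- A greedy packing of a finite simple graph `G`: a nonnegative vertex vector `x` for
which there is a (strict) linear order `p` on the vertices such that for every vertex `v`,
`x v` plus the sum of `x u` over neighbors `u` of `v` preceding `v` is at most `1`. -/
def IsGreedyPacking {V : Type*} [Fintype V] (G : SimpleGraph V) [DecidableRel G.Adj]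
    (x : V → ℝ) : Prop :=
  (∀ v : V, 0 ≤ x v) ∧
  ∃ p : V → V → Prop, IsStrictTotalOrder V p ∧
    ∀ v : V, x v + ∑ u ∈ G.neighborFinset v, (if p u v then x u else 0) ≤ 1

/-!
Summing `Σ_y(v) ≥ 1/2` over `v ∈ S` gives `|S| / 2 ≤ ∑_u |S ∩ N⁺(u)| · y_u`. A vertex
`u ∈ S` meets `S` only in itself, since `S` is independent; otherwise `S ∩ N⁺(u) = S ∩ N(u)`
is an independent subset of `N(u)`. Either way `|S ∩ N⁺(u)| ≤ r`.
-/

namespace SimpleGraph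

variable {V : Type*} [Fintype V] [DecidableEq V] (G : SimpleGraph V) [DecidableRel G.Adj]

def closedNeighborFinset (v : V) : Finset V := insert v (G.neighborFinset v)

def NeighborhoodIndependenceLE (r : ℕ) : Prop :=
  ∀ v : V, ∀ T : Finset V, (∀ u ∈ T, G.Adj v u) → G.IsIndepSet (T : Set V) → T.card ≤ r

variable {G}

theorem mem_closedNeighborFinset {u v : V} :
    u ∈ G.closedNeighborFinset v ↔ u = v ∨ G.Adj v u := by
  simp [closedNeighborFinset]

theorem mem_closedNeighborFinset_comm {u v : V} :
    u ∈ G.closedNeighborFinset v ↔ v ∈ G.closedNeighborFinset u := by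
  simp only [mem_closedNeighborFinset, eq_comm, G.adj_comm]

theorem sum_closedNeighborFinset (x : V → ℝ) (v : V) :
    ∑ u ∈ G.closedNeighborFinset v, x u = x v + ∑ u ∈ G.neighborFinset v, x u :=
  sum_insert (G.notMem_neighborFinset_self v)

theorem card_inter_closedNeighborFinset_le {r : ℕ} (hr : 1 ≤ r)
    (hni : G.NeighborhoodIndependenceLE r) {S : Finset V} (hS : G.IsIndepSet (S : Set V))
    (u : V) : (S ∩ G.closedNeighborFinset u).card ≤ r := by
  by_cases hu : u ∈ S
  · have hsub : S ∩ G.closedNeighborFinset u ⊆ {u} := by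
      intro v hv
      obtain ⟨hvS, hvu⟩ := mem_inter.mp hv
      rcases mem_closedNeighborFinset.mp hvu with rfl | hadj
      · exact mem_singleton_self v
      · exact absurd hadj (hS hu hvS (G.ne_of_adj hadj))
    exact (card_le_card hsub).trans (card_singleton u ▸ hr)
  · refine hni u _ (fun v hv => ?_) (hS.mono inter_subset_left)
    obtain ⟨hvS, hvu⟩ := mem_inter.mp hv
    rcases mem_closedNeighborFinset.mp hvu with rfl | hadj
    · exact absurd hvS hu
    · exact hadj

theorem sum_sum_closedNeighborFinset_eq (S : Finset V) (x : V → ℝ) :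
    ∑ v ∈ S, ∑ u ∈ G.closedNeighborFinset v, x u =
      ∑ u, ((S ∩ G.closedNeighborFinset u).card : ℝ) * x u := by
  rw [sum_comm' (t' := univ) (s' := fun u => S ∩ G.closedNeighborFinset u)]
  · simp only [sum_const, nsmul_eq_mul]
  · intro v u
    simp only [mem_inter, mem_univ, and_true, mem_closedNeighborFinset_comm (u := u)]

theorem sum_sum_closedNeighborFinset_le {r : ℕ} (hr : 1 ≤ r)
    (hni : G.NeighborhoodIndependenceLE r) {S : Finset V} (hS : G.IsIndepSet (S : Set V))
    {x : V → ℝ} (hx : ∀ v, 0 ≤ x v) :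
    ∑ v ∈ S, ∑ u ∈ G.closedNeighborFinset v, x u ≤ r * ∑ u, x u := by
  rw [sum_sum_closedNeighborFinset_eq, mul_sum]
  gcongr with u
  · exact hx u
  · exact_mod_cast card_inter_closedNeighborFinset_le hr hni hS u

end SimpleGraph

theorem greedyPacking_saturated_independent_bound_general
    {V : Type*} [Fintype V]
    (G : SimpleGraph V) [DecidableRel G.Adj]
    (r : ℕ) (hr : 1 ≤ r)
    (hni : ∀ v : V, ∀ S : Finset V, (∀ u ∈ S, G.Adj v u) →
      (∀ u ∈ S, ∀ w ∈ S, u ≠ w → ¬ G.Adj u w) → S.card ≤ r)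
    (y : V → ℝ) (hy : IsGreedyPacking G y)
    (hsat : ∀ v : V, (1 : ℝ) / 2 ≤ y v + ∑ u ∈ G.neighborFinset v, y u)
    (S : Finset V)
    (hSind : ∀ u ∈ S, ∀ w ∈ S, u ≠ w → ¬ G.Adj u w) :
    (S.card : ℝ) ≤ 2 * r * ∑ v : V, y v := by
  have hhalf : (S.card : ℝ) / 2 ≤ ∑ v ∈ S, ∑ u ∈ G.closedNeighborFinset v, y u := by
    calc (S.card : ℝ) / 2 = ∑ _v ∈ S, (1 : ℝ) / 2 := by
          rw [sum_const, nsmul_eq_mul]; ring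
      _ ≤ _ := sum_le_sum fun v _ => (G.sum_closedNeighborFinset y v).symm ▸ hsat v
  have hbound := G.sum_sum_closedNeighborFinset_le (S := S) hr hni hSind hy.1
  linarith

/-- In a finite simple graph of neighborhood independence at most `r`,
if `y` is a greedy packing with `Σ_y(v) ≥ 1/2` for every vertex `v`, then every
independent set `S` satisfies `|S| ≤ 2r · Σ_v y_v`. -/
theorem greedyPacking_saturated_independent_bound
    {V : Type*} [Fintype V] [DecidableEq V]
    (G : SimpleGraph V) [DecidableRel G.Adj]
    (r : ℕ) (hr : 1 ≤ r)
    (hni : ∀ v : V, ∀ S : Finset V, (∀ u ∈ S, G.Adj v u) →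
      (∀ u ∈ S, ∀ w ∈ S, u ≠ w → ¬ G.Adj u w) → S.card ≤ r)
    (y : V → ℝ) (hy : IsGreedyPacking G y)
    (hsat : ∀ v : V, (1 : ℝ) / 2 ≤ y v + ∑ u ∈ G.neighborFinset v, y u)
    (S : Finset V)
    (hSind : ∀ u ∈ S, ∀ w ∈ S, u ≠ w → ¬ G.Adj u w) :
    (S.card : ℝ) ≤ 2 * r * ∑ v : V, y v :=
  greedyPacking_saturated_independent_bound_general G r hr hni y hy hsat S hSind
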